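/- arXiv:2112.05102 — 7 statements merged into one kernel-verified Lean document; each statement's English description precedes it below -/
import Mathlib

section
/- Let m ≥ 2, and let λ1 ≥ λ2 ≥ ... ≥ λ_{2m} ≥ 0 with λ1 + ... + λ_{2m} = 1 and λ_k = 0 for all k ≥ N+1, where N ≥ 3 satisfies 2m = 2^N and N+1 < 2^N − 2. Then the Johnston condition λ1 ≤ λ_{2m−1} + 2√(λ_{2m−2} λ_{2m}) fails. -/
theorem stmt_2 (m N : ℕ) (hm : 2 ≤ m) (hN : 3 ≤ N) (hmN : 2 * m = 2 ^ N)
    (hNm : N + 1 < 2 ^ N - 2) (l : ℕ → ℝ)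
    (hmono : ∀ j k, 1 ≤ j → j ≤ k → k ≤ 2 * m → l k ≤ l j)
    (hnonneg : ∀ k, 1 ≤ k → k ≤ 2 * m → 0 ≤ l k)
    (hsum : ∑ k ∈ Finset.Icc 1 (2 * m), l k = 1)
    (hrank : ∀ k, N + 1 ≤ k → k ≤ 2 * m → l k = 0) :
    ¬ (l 1 ≤ l (2 * m - 1) + 2 * Real.sqrt (l (2 * m - 2) * l (2 * m))) := by
  have h2m : 2 * m = 2 ^ N := hmN
  have hm4 : 4 ≤ 2 * m := by omega
  have hNlt : N + 1 < 2 * m - 2 := by omega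
  have h1 : l (2 * m - 1) = 0 := hrank _ (by omega) (by omega)
  have h2 : l (2 * m - 2) = 0 := hrank _ (by omega) (by omega)
  have h3 : l (2 * m) = 0 := hrank _ (by omega) (by omega)
  rw [h1, h2, h3, zero_mul, Real.sqrt_zero]
  simp only [zero_add, mul_zero]
  intro hle
  have hall : ∀ k ∈ Finset.Icc 1 (2 * m), l k ≤ 0 := by
    intro k hk
    simp only [Finset.mem_Icc] at hk
    exact le_trans (hmono 1 k le_rfl hk.1 hk.2) hle
  have : ∑ k ∈ Finset.Icc 1 (2 * m), l k ≤ 0 :=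
    Finset.sum_nonpos hall
  linarith
end

section
/- Let τ1 ≥ τ2 ≥ τ3 ≥ 0 with τ1 + τ2 + τ3 = 1. Then √(τ1² + (τ2 − τ3)²) ≤ τ2 + τ3 if and only if √τ2 + √τ3 ≥ 1. -/
theorem stmt_3 (t1 t2 t3 : ℝ) (h12 : t1 ≥ t2) (h23 : t2 ≥ t3) (h3 : t3 ≥ 0)
    (hsum : t1 + t2 + t3 = 1) :
    Real.sqrt (t1^2 + (t2 - t3)^2) ≤ t2 + t3 ↔ Real.sqrt t2 + Real.sqrt t3 ≥ 1 := by
  have h2 : (0:ℝ) ≤ t2 := le_trans h3 h23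
  have h1 : (0:ℝ) ≤ t1 := le_trans h2 h12
  set a := Real.sqrt t2 with ha
  set b := Real.sqrt t3 with hb
  have ha0 : 0 ≤ a := Real.sqrt_nonneg _
  have hb0 : 0 ≤ b := Real.sqrt_nonneg _
  have ha2 : a^2 = t2 := Real.sq_sqrt h2
  have hb2 : b^2 = t3 := Real.sq_sqrt h3
  constructor
  · intro h
    have hX : 0 ≤ t1^2 + (t2 - t3)^2 := by positivity
    have hsq : (Real.sqrt (t1^2 + (t2-t3)^2))^2 = t1^2 + (t2-t3)^2 := Real.sq_sqrt hX
    have key : t1^2 + (t2-t3)^2 ≤ (t2+t3)^2 := by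
      nlinarith [Real.sqrt_nonneg (t1^2 + (t2-t3)^2), add_nonneg h2 h3]
    have hk : t1 ≤ 2*a*b := by
      nlinarith [key, mul_nonneg ha0 hb0, ha2, hb2]
    have hone : 1 ≤ (a+b)^2 := by nlinarith [hk, ha2, hb2]
    nlinarith [hone, add_nonneg ha0 hb0]
  · intro h
    have h2ab : t1 ≤ 2*a*b := by nlinarith [h, ha2, hb2, add_nonneg ha0 hb0]
    have hsq2 : t1^2 ≤ (2*a*b)^2 := by nlinarith [h2ab, h1, mul_nonneg ha0 hb0]
    have key : t1^2 + (t2-t3)^2 ≤ (t2+t3)^2 := by nlinarith [hsq2, ha2, hb2]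
    have h' : Real.sqrt (t1^2 + (t2-t3)^2) ≤ Real.sqrt ((t2+t3)^2) :=
      Real.sqrt_le_sqrt key
    rwa [Real.sqrt_sq (by linarith : (0:ℝ) ≤ t2 + t3)] at h'
end

section
/- For real α, β, let Σ1 = [[cos²β, 0, 0], [0, cosβ sinβ, 0], [0, 0, sin²β]] and Σ2 = (1/2)[[0,0,−1],[0,1,0],[−1,0,0]]; then the 3×3 Hermitian matrix X = cos²α·Σ1 + sin²α·Σ2 has eigenvalues (1 + y1 − √(2(1 + y1² − 2y2²)))/4, (1 + y1 + √(2(1 + y1² − 2y2²)))/4, and (1 − y1 + 2y2)/4, where y1 = cos(2α) and y2 = cos²α · sin(2β). -/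
open Polynomial Real

theorem stmt_6 (α β : ℝ) :
    let S1 : Matrix (Fin 3) (Fin 3) ℝ :=
      !![cos β ^ 2, 0, 0; 0, cos β * sin β, 0; 0, 0, sin β ^ 2]
    let S2 : Matrix (Fin 3) (Fin 3) ℝ :=
      (1/2 : ℝ) • !![0, 0, -1; 0, 1, 0; -1, 0, 0]
    let X := cos α ^ 2 • S1 + sin α ^ 2 • S2
    let y1 := cos (2 * α)
    let y2 := cos α ^ 2 * sin (2 * β)
    X.charpoly =
      (Polynomial.X - C ((1 + y1 - Real.sqrt (2 * (1 + y1^2 - 2*y2^2))) / 4)) *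
      (Polynomial.X - C ((1 + y1 + Real.sqrt (2 * (1 + y1^2 - 2*y2^2))) / 4)) *
      (Polynomial.X - C ((1 - y1 + 2*y2) / 4)) := by
  intro S1 S2 M y1 y2
  have hnn : 0 ≤ 2 * (1 + y1 ^ 2 - 2 * y2 ^ 2) := by
    have h1 : (cos α ^ 2) ^ 2 * (sin (2 * β)) ^ 2 ≤ (cos α ^ 2) ^ 2 * 1 :=
      mul_le_mul_of_nonneg_left (sin_sq_le_one (2 * β)) (sq_nonneg _)
    simp only [y1, y2, cos_two_mul]
    nlinarith [sq_nonneg (1 - cos α ^ 2)]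
  set s : ℝ := Real.sqrt (2 * (1 + y1 ^ 2 - 2 * y2 ^ 2)) with hsdef
  have hs : s ^ 2 = 2 * (1 + y1 ^ 2 - 2 * y2 ^ 2) := Real.sq_sqrt hnn
  rw [Matrix.charpoly, Matrix.det_fin_three]
  apply Polynomial.funext
  intro x
  have pc : sin α ^ 2 = 1 - cos α ^ 2 := sin_sq α
  have pb : sin β ^ 2 = 1 - cos β ^ 2 := sin_sq β
  simp only [y1, y2, cos_two_mul, sin_two_mul] at hs ⊢
  simp [Matrix.charmatrix_apply, S1, S2, M, Matrix.add_apply, Matrix.smul_apply]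
  set ca := cos α
  set sa := sin α
  set cb := cos β
  set sb := sin β
  have m : ℝ := sa ^ 2 / 2 + ca ^ 2 * cb * sb
  linear_combination
    (-(x - (sa ^ 2 / 2 + ca ^ 2 * cb * sb)) * ca ^ 2 * x) * pb +
    ((x - (sa ^ 2 / 2 + ca ^ 2 * cb * sb)) / 16) * hs +
    (-(x - (sa ^ 2 / 2 + ca ^ 2 * cb * sb)) * (1 - ca ^ 2 + sa ^ 2) / 4
      - (x ^ 2 - ca ^ 2 * x + (4 * ca ^ 4 - s ^ 2) / 16) / 2) * pc
end

section
/- For real α, β with z = −sin²α + cos²α·sin(2β), the 3×3 Hermitian matrix X = cos²α·Σ1 + sin²α·Σ2 + cosα·sinα·Σ3, where Σ1 = [[cos²β,0,0],[0,cosβ sinβ,0],[0,0,sin²β]], Σ2 = (1/2)[[0,0,−1],[0,1,0],[−1,0,0]], and Σ3 = i[[0,cosβ,0],[−cosβ,0,sinβ],[0,−sinβ,0]], has eigenvalues (1 + √(1 − z²))/2, z/2, and (1 − √(1 − z²))/2. -/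
open Polynomial Real

lemma cp3 (M : Matrix (Fin 3) (Fin 3) ℂ) :
    M.charpoly = X^3 - C (M 0 0 + M 1 1 + M 2 2) * X^2
      + C (M 0 0 * M 1 1 + M 0 0 * M 2 2 + M 1 1 * M 2 2
          - M 0 1 * M 1 0 - M 0 2 * M 2 0 - M 1 2 * M 2 1) * X
      - C (M 0 0 * (M 1 1 * M 2 2 - M 1 2 * M 2 1)
          - M 0 1 * (M 1 0 * M 2 2 - M 1 2 * M 2 0)
          + M 0 2 * (M 1 0 * M 2 1 - M 1 1 * M 2 0)) := by
  rw [Matrix.charpoly, Matrix.det_fin_three]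
  simp only [Matrix.charmatrix_apply_eq, Matrix.charmatrix_apply_ne _ _ _ (by decide : (0:Fin 3) ≠ 1),
    Matrix.charmatrix_apply_ne _ _ _ (by decide : (0:Fin 3) ≠ 2),
    Matrix.charmatrix_apply_ne _ _ _ (by decide : (1:Fin 3) ≠ 0),
    Matrix.charmatrix_apply_ne _ _ _ (by decide : (1:Fin 3) ≠ 2),
    Matrix.charmatrix_apply_ne _ _ _ (by decide : (2:Fin 3) ≠ 0),
    Matrix.charmatrix_apply_ne _ _ _ (by decide : (2:Fin 3) ≠ 1),
    C_add, C_mul, C_sub, C_neg]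
  ring

lemma cubic (a b c : ℂ) : (X - C a) * (X - C b) * (X - C c)
    = X^3 - C (a+b+c)*X^2 + C (a*b+a*c+b*c)*X - C (a*b*c) := by
  simp only [C_add, C_mul]; ring

theorem stmt_7 (α β : ℝ) :
    let S1 : Matrix (Fin 3) (Fin 3) ℂ :=
      !![(cos β : ℂ) ^ 2, 0, 0; 0, (cos β : ℂ) * (sin β : ℂ), 0; 0, 0, (sin β : ℂ) ^ 2]
    let S2 : Matrix (Fin 3) (Fin 3) ℂ :=
      (1/2 : ℂ) • !![0, 0, -1; 0, 1, 0; -1, 0, 0]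
    let S3 : Matrix (Fin 3) (Fin 3) ℂ :=
      Complex.I • !![0, (cos β : ℂ), 0; -(cos β : ℂ), 0, (sin β : ℂ); 0, -(sin β : ℂ), 0]
    let X := ((cos α : ℂ) ^ 2) • S1 + ((sin α : ℂ) ^ 2) • S2
      + ((cos α : ℂ) * (sin α : ℂ)) • S3
    let z := - sin α ^ 2 + cos α ^ 2 * sin (2 * β)
    X.charpoly =
      (Polynomial.X - C (((1 + Real.sqrt (1 - z^2)) / 2 : ℝ) : ℂ)) *
      (Polynomial.X - C ((z / 2 : ℝ) : ℂ)) *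
      (Polynomial.X - C (((1 - Real.sqrt (1 - z^2)) / 2 : ℝ) : ℂ)) := by
  intro S1 S2 S3 M z
  have hzle : z^2 ≤ 1 := by
    have h1 := sin_sq_add_cos_sq α
    have h2 := neg_one_le_sin (2*β)
    have h3 := sin_le_one (2*β)
    have hc2 : (0:ℝ) ≤ cos α ^ 2 := sq_nonneg _
    have hl : -1 ≤ z := by simp only [z]; nlinarith [mul_nonneg hc2 (by linarith : (0:ℝ) ≤ 1 + sin (2*β))]
    have hr : z ≤ 1 := by simp only [z]; nlinarith [mul_nonneg hc2 (by linarith : (0:ℝ) ≤ 1 - sin (2*β))]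
    nlinarith [hl, hr]
  have hs : ((Real.sqrt (1 - z^2) : ℝ) : ℂ)^2 = 1 - (z:ℂ)^2 := by
    rw [← Complex.ofReal_pow, Real.sq_sqrt (by linarith)]
    push_cast; ring
  have hzc : (z:ℂ) = 2*(cos α:ℂ)^2*(cos β:ℂ)*(sin β:ℂ) - (sin α:ℂ)^2 := by
    simp only [z]
    push_cast [Real.sin_two_mul]; ring
  rw [hzc] at hs
  have hab : (cos α:ℂ)^2 + (sin α:ℂ)^2 = 1 := by
    exact_mod_cast cos_sq_add_sin_sq α
  have hcd : (cos β:ℂ)^2 + (sin β:ℂ)^2 = 1 := by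
    exact_mod_cast cos_sq_add_sin_sq β
  have hI : Complex.I^2 = -1 := Complex.I_sq
  rw [cp3, cubic]
  simp only [M, S1, S2, S3, Matrix.add_apply, Matrix.smul_apply, Matrix.of_apply,
    Matrix.cons_val', Matrix.cons_val_zero, Matrix.cons_val_one, Matrix.cons_val_two,
    Matrix.head_cons, Matrix.tail_cons, Matrix.empty_val', Matrix.cons_val_fin_one,
    Matrix.head_fin_const, smul_eq_mul]
  push_cast [-Complex.ofReal_cos, -Complex.ofReal_sin]
  rw [hzc]
  set a := (cos α:ℂ); set b := (sin α:ℂ); set c := (cos β:ℂ); set d := (sin β:ℂ)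
  congr 1
  · congr 1
    · congr 1
      congr 1
      try rw [C_inj]
      linear_combination a^2*hcd + hab
    · congr 1
      congr 1
      try rw [C_inj]
      linear_combination (a^2*b^2*(c^2+d^2))*hI + (1/4)*hs
        + (a^4*c*d - a^2*b^2/2)*hcd + (a^2*c*d - b^2/2)*hab
  · try rw [C_inj]
    linear_combination (2*a^4*b^2*c^2*d^2 - a^2*b^4*c*d)*hI
      + ((2*a^2*c*d - b^2)/8)*hs
end

section
/- Let τ1 ≥ τ2 ≥ τ3 ≥ 0 with τ1 + τ2 + τ3 = 1. If τ1² + τ2² + τ3² − 1/3 ≤ 1/24 (i.e., the distance r from the maximally mixed state satisfies r ≤ 1/(2√6)), then √τ2 + √τ3 ≥ 1. -/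
theorem stmt_13 (t1 t2 t3 : ℝ) (h12 : t1 ≥ t2) (h23 : t2 ≥ t3) (h3 : t3 ≥ 0)
    (hsum : t1 + t2 + t3 = 1) (hr : t1^2 + t2^2 + t3^2 - 1/3 ≤ 1/24) :
    Real.sqrt t2 + Real.sqrt t3 ≥ 1 := by
  have h2 : t2 ≥ 0 := le_trans h3 h23
  have h1 : t1 ≥ 1/3 := by nlinarith
  have ht1 : t1 ≤ 1/2 := by nlinarith [sq_nonneg (t2 - t3)]
  have hkey : t2 * t3 ≥ (t1/2)^2 := by nlinarith [sq_nonneg (t1 - 1/2)]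
  have hsq : Real.sqrt (t2 * t3) ≥ t1/2 := by
    have := Real.sqrt_le_sqrt hkey
    rwa [Real.sqrt_sq (by linarith : (0:ℝ) ≤ t1/2)] at this
  have hab : Real.sqrt t2 * Real.sqrt t3 = Real.sqrt (t2 * t3) :=
    (Real.sqrt_mul h2 t3).symm
  have ha2 : Real.sqrt t2 ^ 2 = t2 := Real.sq_sqrt h2
  have hb2 : Real.sqrt t3 ^ 2 = t3 := Real.sq_sqrt h3
  have hpos : Real.sqrt t2 + Real.sqrt t3 ≥ 0 :=
    add_nonneg (Real.sqrt_nonneg _) (Real.sqrt_nonneg _)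
  nlinarith [hsq, hab, ha2, hb2, hpos]
end

section
/- Let τ1 ≥ τ2 ≥ τ3 ≥ 0 with τ1 + τ2 + τ3 = 1, τ3 ∈ [1/9, 1/3], and let r = √(τ1² + τ2² + τ3² − 1/3). Then √τ2 + √τ3 ≥ 1 if and only if r ≤ √(2/3)·(1 + 3(τ3 − √τ3)). -/
set_option maxHeartbeats 1600000 in
theorem stmt_14 (t1 t2 t3 : ℝ) (h12 : t1 ≥ t2) (h23 : t2 ≥ t3) (h3 : t3 ≥ 0)
    (hsum : t1 + t2 + t3 = 1) (hlo : 1/9 ≤ t3) (hhi : t3 ≤ 1/3) :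
    Real.sqrt t2 + Real.sqrt t3 ≥ 1 ↔
      Real.sqrt (t1^2 + t2^2 + t3^2 - 1/3)
        ≤ Real.sqrt (2/3) * (1 + 3 * (t3 - Real.sqrt t3)) := by
  have h2 : (0:ℝ) ≤ t2 := le_trans h3 h23
  obtain ⟨u, hu⟩ : ∃ u, Real.sqrt t3 = u := ⟨_, rfl⟩
  obtain ⟨s, hs⟩ : ∃ s, Real.sqrt t2 = s := ⟨_, rfl⟩
  rw [hu, hs]
  have hu2 : u^2 = t3 := by rw [← hu]; exact Real.sq_sqrt h3
  have hs2 : s^2 = t2 := by rw [← hs]; exact Real.sq_sqrt h2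
  have hun : 0 ≤ u := hu ▸ Real.sqrt_nonneg _
  have hsn : 0 ≤ s := hs ▸ Real.sqrt_nonneg _
  have hu13 : 1/3 ≤ u := by nlinarith
  have hu1 : u ≤ 1 := by nlinarith
  have hsu : u ≤ s := by rw [← hu, ← hs]; exact Real.sqrt_le_sqrt h23
  have hP : 0 ≤ 1 + 3 * (t3 - u) := by nlinarith [sq_nonneg (2*u - 1)]
  have hL : 0 ≤ t1^2 + t2^2 + t3^2 - 1/3 := by
    nlinarith [sq_nonneg (t1-t2), sq_nonneg (t1-t3), sq_nonneg (t2-t3)]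
  have hRHS : Real.sqrt (2/3) * (1 + 3 * (t3 - u))
      = Real.sqrt ((2/3) * (1 + 3*(t3-u))^2) := by
    rw [Real.sqrt_mul (by norm_num : (0:ℝ) ≤ 2/3), Real.sqrt_sq hP]
  rw [hRHS]
  have hYpos : (0:ℝ) ≤ (2/3) * (1 + 3*(t3-u))^2 := by positivity
  rw [Real.sqrt_le_sqrt_iff hYpos]
  have ht1 : t1 = 1 - s^2 - u^2 := by linarith [hs2, hu2]
  have hid : t1^2 + t2^2 + t3^2 - 1/3
      = 2/3 * (1 + 3*(t3 - u))^2 + 2*((s^2 - (1-u)^2) * (s^2 - 2*u*(1-u))) := by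
    rw [ht1, ← hs2, ← hu2]; ring
  have hY : s^2 ≤ 2*u*(1-u) := by
    nlinarith [mul_nonneg (by linarith : (0:ℝ) ≤ 1-u) (by linarith : (0:ℝ) ≤ 3*u-1)]
  constructor
  · intro h
    have hsge : 1 - u ≤ s := by linarith
    have e1 : (s - (1-u)) * (s + (1-u)) = s^2 - (1-u)^2 := by ring
    have hX : 0 ≤ s^2 - (1-u)^2 := by
      have := mul_nonneg (by linarith : (0:ℝ) ≤ s - (1-u)) (by linarith : (0:ℝ) ≤ s + (1-u))
      linarith [e1]
    have hprod : 0 ≤ (s^2 - (1-u)^2) * (2*u*(1-u) - s^2) :=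
      mul_nonneg hX (by linarith : (0:ℝ) ≤ 2*u*(1-u) - s^2)
    have e2 : (s^2 - (1-u)^2) * (s^2 - 2*u*(1-u))
        = -((s^2 - (1-u)^2) * (2*u*(1-u) - s^2)) := by ring
    linarith [hid, hprod, e2]
  · intro h
    by_contra hc
    push_neg at hc
    have e1 : ((1-u) - s) * ((1-u) + s) = (1-u)^2 - s^2 := by ring
    have hX : 0 < (1-u)^2 - s^2 := by
      have := mul_pos (by linarith : (0:ℝ) < (1-u) - s) (by linarith : (0:ℝ) < (1-u) + s)
      linarith [e1]
    have e3 : (1-u) * (3*u-1) = (2*u*(1-u) - s^2) - ((1-u)^2 - s^2) := by ring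
    have hYX : (1-u)^2 - s^2 ≤ 2*u*(1-u) - s^2 := by
      have := mul_nonneg (by linarith : (0:ℝ) ≤ 1-u) (by linarith : (0:ℝ) ≤ 3*u-1)
      linarith [e3]
    have hXY : 0 < ((1-u)^2 - s^2) * (2*u*(1-u) - s^2) :=
      mul_pos hX (lt_of_lt_of_le hX hYX)
    have e2 : (s^2 - (1-u)^2) * (s^2 - 2*u*(1-u))
        = ((1-u)^2 - s^2) * (2*u*(1-u) - s^2) := by ring
    linarith [hid, hXY, e2, h]
end

section
/- Define f(τ3, τ4) = (τ3 − 1/4)² + (τ4 − 1/4)² + (√(3τ3τ4) − 1/4)² + (τ3 + τ4 + √(3τ3τ4) − 3/4)². Then for all τ3 ≥ τ4 ≥ 0 with 1 − τ3 − τ4 − √(3τ3τ4) ≥ τ3 (so that the sorted-spectrum constraints τ1 ≥ τ2 ≥ τ3 ≥ τ4 hold on the surface τ2 = 1 − τ3 − τ4 − √(3τ3τ4)), one has f(τ3, τ4) ≥ (9 − 5√3)/24, with equality at τ3 = τ4 = (3 + √3)/24. -/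
theorem key_ineq_stmt16 (a b s r : ℝ)
    (hs2 : s^2 = 3*a*b) (hr : r^2 = 3) (hr1 : 1.71 < r) (hr2 : r < 1.8) :
    (a - 1/4)^2 + (b - 1/4)^2 + (s - 1/4)^2 + (a + b + s - 3/4)^2 ≥ (9 - 5*r)/24 := by
  nlinarith [mul_nonneg (by nlinarith : (0:ℝ) ≤ 100*r - 171) (sq_nonneg (a-b)),
    sq_nonneg ((12-5*r)*(a+b)+2*s-2),
    mul_nonneg (by nlinarith : (0:ℝ) ≤ 120*r - 200) (sq_nonneg (8*s-1-r)),
    hs2, hr, (by nlinarith : (0:ℝ) < 12 - 5*r)]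

theorem stmt_16 :
    (∀ t3 t4 : ℝ, t3 ≥ t4 → t4 ≥ 0 →
      1 - t3 - t4 - Real.sqrt (3*t3*t4) ≥ t3 →
      (t3 - 1/4)^2 + (t4 - 1/4)^2 + (Real.sqrt (3*t3*t4) - 1/4)^2
        + (t3 + t4 + Real.sqrt (3*t3*t4) - 3/4)^2 ≥ (9 - 5*Real.sqrt 3)/24) ∧
    (((3 + Real.sqrt 3)/24 - 1/4)^2 + ((3 + Real.sqrt 3)/24 - 1/4)^2
      + (Real.sqrt (3*((3 + Real.sqrt 3)/24)*((3 + Real.sqrt 3)/24)) - 1/4)^2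
      + ((3 + Real.sqrt 3)/24 + (3 + Real.sqrt 3)/24
        + Real.sqrt (3*((3 + Real.sqrt 3)/24)*((3 + Real.sqrt 3)/24)) - 3/4)^2
      = (9 - 5*Real.sqrt 3)/24) := by
  have hr : Real.sqrt 3 ^ 2 = 3 := Real.sq_sqrt (by norm_num)
  have hr0 : (0:ℝ) ≤ Real.sqrt 3 := Real.sqrt_nonneg 3
  have hr1 : (1.71:ℝ) < Real.sqrt 3 := by
    nlinarith [hr, hr0, sq_nonneg (Real.sqrt 3 - 1.71)]
  have hr2 : Real.sqrt 3 < 1.8 := by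
    nlinarith [hr, hr0, sq_nonneg (Real.sqrt 3 - 1.8)]
  set r := Real.sqrt 3 with hrdef
  constructor
  · intro t3 t4 h34 h4 _
    have h3 : (0:ℝ) ≤ t3 := le_trans h4 h34
    have hs2 : Real.sqrt (3*t3*t4) ^ 2 = 3*t3*t4 :=
      Real.sq_sqrt (by positivity)
    exact key_ineq_stmt16 t3 t4 _ r hs2 hr hr1 hr2
  · have hkey : Real.sqrt (3*((3 + r)/24)*((3 + r)/24)) = r * ((3 + r)/24) := by
      rw [show 3*((3 + r)/24)*((3 + r)/24) = (r * ((3 + r)/24))^2 by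
        rw [mul_pow, hr]; ring]
      exact Real.sqrt_sq (by positivity)
    rw [hkey]
    linear_combination (r^2/288 + r/36 + 1/96) * hr
end
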